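/- arXiv:2009.00537 — 2 statements merged into one kernel-verified Lean document; each statement's English description precedes it below -/
import Mathlib

section
/- For ν₁ > 0 and 0 ≤ ν₂, one has ∫_{S²} x² exp(−ν₁x² − ν₂y²) dS = 4π ∫₀¹ x² e^{−ν₁x²} exp(−ν₂(1−x²)/2) I₀(ν₂(1−x²)/2) dx, where the left integral is over the unit sphere in ℝ³ with surface measure. -/
/-!
Integrate first over the azimuth φ. With y = sin θ cos φ, the half-angle formula
cos² φ = (1 + cos 2φ) / 2 splits exp(-ν₂ y²) into exp(-ν₂ sin² θ / 2) times
exp(-(ν₂ sin² θ / 2) cos 2φ), whose integral over a full period is 2π I₀(ν₂ sin² θ / 2),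
as I₀ is even. The substitution x = cos θ turns the remaining θ-integral into an integral over
[-1, 1] of an even function of x, i.e. twice the integral over [0, 1].
-/

open Real

noncomputable def besselI0 (x : ℝ) : ℝ := (1 / π) * ∫ θ in (0:ℝ)..π, Real.exp (x * Real.cos θ)

noncomputable def sphereIntegral (f : ℝ → ℝ → ℝ → ℝ) : ℝ :=
  ∫ θ in (0:ℝ)..π, ∫ φ in (0:ℝ)..(2 * π),
    f (Real.cos θ) (Real.sin θ * Real.cos φ) (Real.sin θ * Real.sin φ) * Real.sin θ

open intervalIntegral

@[fun_prop]
theorem continuous_besselI0 : Continuous besselI0 :=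
  continuous_const.mul <| continuous_parametric_intervalIntegral_of_continuous'
    (by fun_prop : Continuous fun p : ℝ × ℝ => exp (p.1 * cos p.2)) 0 π

theorem besselI0_neg (c : ℝ) : besselI0 (-c) = besselI0 c := by
  have h := integral_comp_sub_left (fun θ => exp (-c * cos θ)) π (a := 0) (b := π)
  simp only [sub_self, sub_zero, cos_pi_sub, mul_neg, neg_mul, neg_neg] at h
  simp only [besselI0, neg_mul, h]

section CosIntegrals

variable {h : ℝ → ℝ}

theorem integral_comp_cos_zero_two_pi (hh : Continuous h) :
    ∫ u in (0:ℝ)..(2 * π), h (cos u) = 2 * ∫ u in (0:ℝ)..π, h (cos u) := by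
  have hint : ∀ s t : ℝ, IntervalIntegrable (fun u => h (cos u)) MeasureTheory.volume s t :=
    fun s t => (hh.comp continuous_cos).intervalIntegrable s t
  have hreflect : ∫ u in π..(2 * π), h (cos u) = ∫ u in (0:ℝ)..π, h (cos u) := by
    have := integral_comp_sub_left (fun u => h (cos u)) (2 * π) (a := 0) (b := π)
    simp only [cos_two_pi_sub, sub_zero, show 2 * π - π = π by ring] at this
    exact this.symm
  rw [← integral_add_adjacent_intervals (hint 0 π) (hint π (2 * π)), hreflect]
  ring

theorem integral_comp_cos_two_mul (hh : Continuous h) :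
    ∫ φ in (0:ℝ)..(2 * π), h (cos (2 * φ)) = ∫ u in (0:ℝ)..(2 * π), h (cos u) := by
  have hper : Function.Periodic (fun u => h (cos u)) (2 * π) := fun u => by
    simp only [cos_add_two_pi]
  have htwice := hper.intervalIntegral_add_zsmul_eq 2 0
    fun s t => (hh.comp continuous_cos).intervalIntegrable s t
  rw [integral_comp_mul_left (fun u => h (cos u)) two_ne_zero]
  simp only [zero_add, mul_zero] at htwice ⊢
  rw [show (2:ℝ) * (2 * π) = (2:ℤ) • (2 * π) by norm_num, htwice]
  simp only [smul_eq_mul, zsmul_eq_mul]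
  ring

end CosIntegrals

theorem integral_exp_mul_cos (b : ℝ) :
    ∫ u in (0:ℝ)..(2 * π), exp (b * cos u) = 2 * π * besselI0 b := by
  rw [integral_comp_cos_zero_two_pi (h := fun t => exp (b * t)) (by fun_prop), besselI0]
  field_simp [pi_ne_zero]

theorem integral_exp_neg_mul_cos_sq (a : ℝ) :
    ∫ φ in (0:ℝ)..(2 * π), exp (-(a * cos φ ^ 2))
      = 2 * π * exp (-a / 2) * besselI0 (a / 2) := by
  have hhalf : ∀ φ, exp (-(a * cos φ ^ 2)) = exp (-a / 2) * exp (-a / 2 * cos (2 * φ)) := by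
    intro φ
    rw [cos_sq, ← exp_add]
    ring_nf
  simp only [hhalf]
  rw [integral_const_mul, integral_comp_cos_two_mul (h := fun t => exp (-a / 2 * t)) (by fun_prop),
    integral_exp_mul_cos, neg_div, besselI0_neg]
  ring

theorem integral_sin_mul_comp_cos {G : ℝ → ℝ} (hG : Continuous G) :
    ∫ θ in (0:ℝ)..π, sin θ * G (cos θ) = ∫ x in (-1:ℝ)..1, G x := by
  have h := integral_comp_mul_deriv (a := 0) (b := π) (fun x _ => hasDerivAt_cos x)
    (continuous_sin.neg.continuousOn) hG
  simp only [Function.comp, mul_neg, integral_neg, cos_zero, cos_pi] at h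
  rw [integral_symm 1, ← h, neg_neg]
  simp only [mul_comm]

theorem integral_neg_eq_two_mul_integral_of_even {G : ℝ → ℝ} (hG : Continuous G)
    (heven : ∀ x, G (-x) = G x) (a : ℝ) : ∫ x in -a..a, G x = 2 * ∫ x in (0:ℝ)..a, G x := by
  have hleft : ∫ x in -a..0, G x = ∫ x in (0:ℝ)..a, G x := by
    simpa only [neg_zero, heven] using (integral_comp_neg (a := 0) (b := a) G).symm
  rw [← integral_add_adjacent_intervals (hG.intervalIntegrable _ 0) (hG.intervalIntegrable 0 _),
    hleft]
  ring

theorem sphere_second_moment_reduction_general (ν₁ ν₂ : ℝ) :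
    sphereIntegral (fun x y _ => x ^ 2 * Real.exp (-ν₁ * x ^ 2 - ν₂ * y ^ 2))
      = 4 * π * ∫ x in (0:ℝ)..1,
          x ^ 2 * Real.exp (-ν₁ * x ^ 2) * Real.exp (-(ν₂ * (1 - x ^ 2)) / 2)
            * besselI0 (ν₂ * (1 - x ^ 2) / 2) := by
  set g : ℝ → ℝ := fun x => x ^ 2 * exp (-ν₁ * x ^ 2) * exp (-(ν₂ * (1 - x ^ 2)) / 2)
    * besselI0 (ν₂ * (1 - x ^ 2) / 2) with hg
  have hinner : ∀ θ, ∫ φ in (0:ℝ)..(2 * π),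
      cos θ ^ 2 * exp (-ν₁ * cos θ ^ 2 - ν₂ * (sin θ * cos φ) ^ 2) * sin θ
        = sin θ * (2 * π * g (cos θ)) := fun θ => by
    have hsplit : ∀ φ, cos θ ^ 2 * exp (-ν₁ * cos θ ^ 2 - ν₂ * (sin θ * cos φ) ^ 2) * sin θ
        = cos θ ^ 2 * exp (-ν₁ * cos θ ^ 2) * sin θ * exp (-(ν₂ * sin θ ^ 2 * cos φ ^ 2)) := by
      intro φ
      rw [show -ν₁ * cos θ ^ 2 - ν₂ * (sin θ * cos φ) ^ 2
          = -ν₁ * cos θ ^ 2 + -(ν₂ * sin θ ^ 2 * cos φ ^ 2) by ring, exp_add]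
      ring
    simp only [hsplit, integral_const_mul, integral_exp_neg_mul_cos_sq, hg, sin_sq θ]
    ring
  calc _ = ∫ θ in (0:ℝ)..π, sin θ * (2 * π * g (cos θ)) :=
        integral_congr fun θ _ => hinner θ
    _ = ∫ x in (-1:ℝ)..1, 2 * π * g x :=
        integral_sin_mul_comp_cos (G := fun x => 2 * π * g x) (by fun_prop)
    _ = 2 * ∫ x in (0:ℝ)..1, 2 * π * g x :=
        integral_neg_eq_two_mul_integral_of_even (by fun_prop)
          (fun x => by simp only [hg, neg_sq]) 1
    _ = _ := by rw [integral_const_mul]; ring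

theorem sphere_second_moment_reduction (ν₁ ν₂ : ℝ) (h1 : 0 < ν₁) (h2 : 0 ≤ ν₂) :
    sphereIntegral (fun x y _ => x ^ 2 * Real.exp (-ν₁ * x ^ 2 - ν₂ * y ^ 2))
      = 4 * π * ∫ x in (0:ℝ)..1,
          x ^ 2 * Real.exp (-ν₁ * x ^ 2) * Real.exp (-(ν₂ * (1 - x ^ 2)) / 2)
            * besselI0 (ν₂ * (1 - x ^ 2) / 2) :=
  sphere_second_moment_reduction_general ν₁ ν₂
end

section
/- Suppose 0 < ε ≤ 1, λ₂ > −1/3, and b ∈ (0, π/2] satisfies sin(2b)/(2b) = 1 − 2(λ₂ + 1/3)/(1 − ε²/3). Then b² > 3(λ₂ + 1/3). -/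
/-! With `d = 1 - ε²/3 ∈ (0, 1)` and `c = λ₂ + 1/3 > 0`, the bound `sin x > x - x³/6` at `x = 2b`
turns the defining equation into `3c/d < b²`, and `3c < 3c/d` because `d < 1`. -/

open Real

theorem one_sub_sq_div_six_lt_sin_div {x : ℝ} (hx : 0 < x) : 1 - x ^ 2 / 6 < sin x / x := by
  rw [lt_div_iff₀ hx]
  linarith [sin_gt_sub_cube hx]

theorem b_sq_lower_bound_general (ε lam2 b : ℝ) (hε0 : 0 < ε) (hε1 : ε ≤ 1)
    (hlam : lam2 > -(1 / 3)) (hb0 : 0 < b)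
    (heq : Real.sin (2 * b) / (2 * b) = 1 - 2 * (lam2 + 1 / 3) / (1 - ε ^ 2 / 3)) :
    b ^ 2 > 3 * (lam2 + 1 / 3) := by
  have hc : 0 < lam2 + 1 / 3 := by linarith
  have hd0 : 0 < 1 - ε ^ 2 / 3 := by nlinarith
  have hd1 : 1 - ε ^ 2 / 3 < 1 := by have := pow_pos hε0 2; linarith
  have hsin := one_sub_sq_div_six_lt_sin_div (by positivity : 0 < 2 * b)
  rw [heq] at hsin
  have hcd : 3 * (lam2 + 1 / 3) / (1 - ε ^ 2 / 3) < b ^ 2 := by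
    rw [mul_div_assoc] at hsin ⊢
    linarith
  calc 3 * (lam2 + 1 / 3) < 3 * (lam2 + 1 / 3) / (1 - ε ^ 2 / 3) :=
        (lt_div_iff₀ hd0).2 (mul_lt_of_lt_one_right (by positivity) hd1)
    _ < b ^ 2 := hcd

theorem b_sq_lower_bound (ε lam2 b : ℝ) (hε0 : 0 < ε) (hε1 : ε ≤ 1)
    (hlam : lam2 > -(1 / 3)) (hb0 : 0 < b) (hb1 : b ≤ π / 2)
    (heq : Real.sin (2 * b) / (2 * b) = 1 - 2 * (lam2 + 1 / 3) / (1 - ε ^ 2 / 3)) :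
    b ^ 2 > 3 * (lam2 + 1 / 3) :=
  b_sq_lower_bound_general ε lam2 b hε0 hε1 hlam hb0 heq
end
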